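/- Let ι, κ, ι', κ' be nonempty finite types, and let v, w : ι × κ → ℂ and V, W : ι' × κ' → ℂ. Suppose that for every unitary matrix U ∈ U(κ), ⟪w, (1_ι ⊗ U) v⟫ = 0, where (1_ι ⊗ U)(i,j),(i',j') := [i = i']·U(j,j'). Define the tensor product vectors x, y : (ι × ι') × (κ × κ') → ℂ by x((i,i'),(j,j')) := v(i,j)·V(i',j') and y((i,i'),(j,j')) := w(i,j)·W(i',j'). Then for every unitary matrix U' ∈ U(κ × κ'), ⟪y, (1_{ι×ι'} ⊗ U') x⟫ = 0, where (1_{ι×ι'} ⊗ U')((a,b),(a',b')) := [a = a']·U'(b,b') for a, a' ∈ ι × ι' and b, b' ∈ κ × κ'. -/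
import Mathlib


open Finset in
lemma signed_perm_unitary {κ : Type*} [Fintype κ] [DecidableEq κ]
    (σ : Equiv.Perm κ) (s : κ → ℂ) (hs : ∀ j, s j * starRingEnd ℂ (s j) = 1) :
    (Matrix.of fun j l : κ => s j * (if σ j = l then 1 else 0)) ∈ Matrix.unitaryGroup κ ℂ := by
  rw [Matrix.mem_unitaryGroup_iff]
  ext j k
  simp only [Matrix.mul_apply, Matrix.star_apply, Matrix.of_apply, Matrix.one_apply,
    star_mul', apply_ite (starRingEnd ℂ), map_one, map_zero]
  rw [Finset.sum_eq_single (σ j)]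
  · by_cases hjk : j = k
    · subst hjk; simp [hs j]
    · have : σ k ≠ σ j := fun hc => hjk (σ.injective hc).symm
      simp [hjk, this]
  · intro b _ hb
    simp [Ne.symm hb]
  · simp

lemma M_zero {ι κ : Type*} [Fintype ι] [Fintype κ] [DecidableEq ι] [DecidableEq κ]
    (v w : ι × κ → ℂ)
    (h : ∀ U ∈ Matrix.unitaryGroup κ ℂ,
        ∑ p : ι × κ, starRingEnd ℂ (w p) *
          (Matrix.of fun p q : ι × κ =>
            (if p.1 = q.1 then (1 : ℂ) else 0) * U p.2 q.2).mulVec v p = 0) :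
    ∀ j l : κ, ∑ i, starRingEnd ℂ (w (i, j)) * v (i, l) = 0 := by
  -- first: for every signed permutation, the contraction vanishes
  have h' : ∀ (σ : Equiv.Perm κ) (s : κ → ℂ), (∀ j, s j * starRingEnd ℂ (s j) = 1) →
      ∑ j : κ, s j * ∑ i : ι, starRingEnd ℂ (w (i, j)) * v (i, σ j) = 0 := by
    intro σ s hs
    have := h _ (signed_perm_unitary σ s hs)
    simp only [Matrix.mulVec, dotProduct, Matrix.of_apply, Fintype.sum_prod_type] at this
    rw [← this]
    rw [Finset.sum_comm]
    apply Finset.sum_congr rfl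
    intro j _
    rw [Finset.mul_sum]
    apply Finset.sum_congr rfl
    intro i _
    rw [Finset.sum_eq_single i]
    · rw [Finset.sum_eq_single (σ j)] <;> simp +contextual [Ne.symm, mul_comm, mul_left_comm, mul_assoc]
    · intro b _ hb; simp [Ne.symm hb]
    · simp
  intro j₀ l₀
  set M : κ → κ → ℂ := fun j l => ∑ i, starRingEnd ℂ (w (i, j)) * v (i, l) with hM
  have h1 := h' (Equiv.swap j₀ l₀) (fun _ => 1) (by simp)
  have h2 := h' (Equiv.swap j₀ l₀) (fun j => if j = j₀ then -1 else 1) (by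
    intro j; by_cases hj : j = j₀ <;> simp [hj])
  simp only [one_mul] at h1
  have h3 : ∑ j : κ, (if j = j₀ then (-1 : ℂ) else 1) * M j (Equiv.swap j₀ l₀ j)
      = (∑ j : κ, M j (Equiv.swap j₀ l₀ j)) - 2 * M j₀ (Equiv.swap j₀ l₀ j₀) := by
    have e : ∀ j : κ, (if j = j₀ then (-1 : ℂ) else 1) * M j (Equiv.swap j₀ l₀ j)
        = M j (Equiv.swap j₀ l₀ j) - (if j = j₀ then 2 * M j (Equiv.swap j₀ l₀ j) else 0) := by
      intro j; by_cases hj : j = j₀ <;> simp [hj] <;> ring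
    simp only [e, Finset.sum_sub_distrib, Finset.sum_ite_eq', Finset.mem_univ, if_true]
  rw [h3, h1, Equiv.swap_apply_left] at h2
  have : (2 : ℂ) * M j₀ l₀ = 0 := by linear_combination -h2
  have h4 : M j₀ l₀ = 0 := by
    have := mul_eq_zero.mp this
    simpa using this
  exact h4

/-- **Orthogonality under local unitaries is preserved by appending arbitrary states.**
If `⟪w, (1_ι ⊗ U) v⟫ = 0` for every unitary `U` on `κ`, then for any vectors `V, W` on an
additional system `ι' × κ'`, the tensor product vectors `v ⊗ V` and `w ⊗ W` satisfy
`⟪w ⊗ W, (1_{ι×ι'} ⊗ U') (v ⊗ V)⟫ = 0` for every unitary `U'` on `κ × κ'`. -/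
theorem korth_tensor_stable {ι κ ι' κ' : Type*}
    [Fintype ι] [Fintype κ] [Fintype ι'] [Fintype κ']
    [Nonempty ι] [Nonempty κ] [Nonempty ι'] [Nonempty κ']
    [DecidableEq ι] [DecidableEq κ] [DecidableEq ι'] [DecidableEq κ']
    (v w : ι × κ → ℂ) (V W : ι' × κ' → ℂ)
    (h : ∀ U ∈ Matrix.unitaryGroup κ ℂ,
        ∑ p : ι × κ, starRingEnd ℂ (w p) *
          (Matrix.of fun p q : ι × κ =>
            (if p.1 = q.1 then (1 : ℂ) else 0) * U p.2 q.2).mulVec v p = 0) :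
    ∀ U' ∈ Matrix.unitaryGroup (κ × κ') ℂ,
      ∑ p : (ι × ι') × (κ × κ'),
        starRingEnd ℂ (w (p.1.1, p.2.1) * W (p.1.2, p.2.2)) *
          (Matrix.of fun p q : (ι × ι') × (κ × κ') =>
            (if p.1 = q.1 then (1 : ℂ) else 0) * U' p.2 q.2).mulVec
            (fun q => v (q.1.1, q.2.1) * V (q.1.2, q.2.2)) p = 0 := by
  intro U' _
  have key := M_zero v w h
  simp only [Matrix.mulVec, dotProduct, Matrix.of_apply, map_mul]
  have collapse : ∀ p : (ι × ι') × (κ × κ'),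
      (∑ q : (ι × ι') × (κ × κ'), (if p.1 = q.1 then (1 : ℂ) else 0) * U' p.2 q.2 *
        (v (q.1.1, q.2.1) * V (q.1.2, q.2.2)))
      = ∑ b : κ × κ', U' p.2 b * (v (p.1.1, b.1) * V (p.1.2, b.2)) := by
    intro p
    rw [Fintype.sum_prod_type, Finset.sum_comm]
    apply Finset.sum_congr rfl
    intro b _
    rw [Finset.sum_eq_single p.1]
    · simp
    · intro a _ ha; simp [Ne.symm ha]
    · simp
  simp only [collapse]
  rw [Fintype.sum_prod_type, Finset.sum_comm]
  apply Finset.sum_eq_zero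
  intro j _
  rw [Finset.sum_congr rfl (fun a _ => Finset.mul_sum _ _ _), Finset.sum_comm]
  apply Finset.sum_eq_zero
  intro b _
  rw [Fintype.sum_prod_type]
  have : ∑ i : ι, ∑ i' : ι',
      starRingEnd ℂ (w (i, j.1)) * starRingEnd ℂ (W (i', j.2)) *
        (U' j b * (v (i, b.1) * V (i', b.2)))
      = (∑ i : ι, starRingEnd ℂ (w (i, j.1)) * v (i, b.1)) *
        (U' j b * ∑ i' : ι', starRingEnd ℂ (W (i', j.2)) * V (i', b.2)) := by
    rw [Finset.sum_mul]
    apply Finset.sum_congr rfl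
    intro i _
    rw [Finset.mul_sum, Finset.mul_sum]
    apply Finset.sum_congr rfl
    intro i' _
    ring
  rw [this, key j.1 b.1, zero_mul]
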